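/- Let w₁,…,w₅₀ ≥ 0 and t₂ > t₃ > … > t₅₁ > 0 be the type thresholds, and suppose x ∈ ℕ⁵⁰ maximizes f(x) = ∑_{i=1}^{50} x_i w_i + (1 − ∑_{i=1}^{50} x_i t_{i+1})·(1/(1−t₅₁)) subject to ∑_{i=1}^{50} x_i t_{i+1} ≤ 1 and x_i ∈ ℕ. Then for any weighting function W with W(p) = w_i for p ∈ (t_{i+1}, t_i] and W(p) = p/(1−t₅₁) for p ≤ t₅₁, every feasible pattern X (finite multiset of (0,1] with total ≤ 1) satisfies ∑_{p∈X} W(p) ≤ f(x). -/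
import Mathlib

open Finset

theorem stmt_19 (t w : ℕ → ℝ)
    (ht1 : t 1 = 1)
    (htmono : ∀ i, 1 ≤ i → i ≤ 50 → t (i + 1) < t i)
    (ht51 : 0 < t 51)
    (hw : ∀ i, 1 ≤ i → i ≤ 50 → 0 ≤ w i)
    (x : ℕ → ℕ)
    (hxfeas : ∑ i ∈ Finset.Icc 1 50, (x i : ℝ) * t (i + 1) ≤ 1)
    (hxmax : ∀ y : ℕ → ℕ, (∑ i ∈ Finset.Icc 1 50, (y i : ℝ) * t (i + 1) ≤ 1) →
      (∑ i ∈ Finset.Icc 1 50, (y i : ℝ) * w i)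
          + (1 - ∑ i ∈ Finset.Icc 1 50, (y i : ℝ) * t (i + 1)) * (1 / (1 - t 51)) ≤
        (∑ i ∈ Finset.Icc 1 50, (x i : ℝ) * w i)
          + (1 - ∑ i ∈ Finset.Icc 1 50, (x i : ℝ) * t (i + 1)) * (1 / (1 - t 51)))
    (W : ℝ → ℝ)
    (hWtype : ∀ i, 1 ≤ i → i ≤ 50 → ∀ p : ℝ, t (i + 1) < p → p ≤ t i → W p = w i)
    (hWsmall : ∀ p : ℝ, 0 < p → p ≤ t 51 → W p = p / (1 - t 51)) :
    ∀ X : Multiset ℝ, (∀ p ∈ X, 0 < p ∧ p ≤ 1) → X.sum ≤ 1 →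
      (X.map W).sum ≤
        (∑ i ∈ Finset.Icc 1 50, (x i : ℝ) * w i)
          + (1 - ∑ i ∈ Finset.Icc 1 50, (x i : ℝ) * t (i + 1)) * (1 / (1 - t 51)) := by
  classical
  intro X hX hXsum
  -- monotonicity of t on [1,51]
  have hmono : ∀ a b : ℕ, 1 ≤ a → a ≤ b → b ≤ 51 → t b ≤ t a := by
    intro a b ha hab hb
    induction b with
    | zero => omega
    | succ n ih =>
      rcases eq_or_lt_of_le hab with h | h
      · rw [h]
      · have hn : a ≤ n := by omega
        have h1 : 1 ≤ n := by omega
        have := htmono n h1 (by omega)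
        exact le_trans (le_of_lt this) (ih hn (by omega))
  have ht51lt1 : t 51 < 1 := by
    have h1 := hmono 2 51 (by norm_num) (by norm_num) le_rfl
    have h2 := htmono 1 le_rfl (by norm_num)
    rw [ht1] at h2
    linarith
  have hpos : (0 : ℝ) < 1 - t 51 := by linarith
  -- the pieces
  set XS : Multiset ℝ := X.filter (fun p => p ≤ t 51) with hXS
  set Xi : ℕ → Multiset ℝ := fun i => X.filter (fun p => t (i + 1) < p ∧ p ≤ t i) with hXi
  -- decomposition
  have hdecomp : X = XS + ∑ i ∈ Icc 1 50, Xi i := by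
    ext p
    rw [Multiset.count_add, Multiset.count_sum']
    by_cases hpX : p ∈ X
    · obtain ⟨hp0, hp1⟩ := hX p hpX
      by_cases hsmall : p ≤ t 51
      · have hterm : ∀ i ∈ Icc 1 50, Multiset.count p (Xi i) = 0 := by
          intro i hi
          simp only [mem_Icc] at hi
          rw [hXi]
          simp only [Multiset.count_filter]
          have : t 51 ≤ t (i + 1) := hmono (i + 1) 51 (by omega) (by omega) le_rfl
          have : ¬ (t (i + 1) < p ∧ p ≤ t i) := by
            rintro ⟨h1, h2⟩; linarith
          simp [this]
        rw [Finset.sum_congr rfl hterm]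
        simp [hXS, Multiset.count_filter, hsmall]
      · push_neg at hsmall
        -- find the unique type
        have hex : ∃ i, 1 ≤ i ∧ i ≤ 50 ∧ t (i + 1) < p ∧ p ≤ t i := by
          have key : ∀ n : ℕ, n ≤ 50 →
              p ≤ t (n + 1) ∨ ∃ i, 1 ≤ i ∧ i ≤ 50 ∧ t (i + 1) < p ∧ p ≤ t i := by
            intro n
            induction n with
            | zero => intro _; left; rw [ht1]; exact hp1
            | succ m ih =>
              intro hm
              rcases ih (by omega) with h | h
              · by_cases h2 : p ≤ t (m + 1 + 1)
                · exact Or.inl h2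
                · push_neg at h2
                  exact Or.inr ⟨m + 1, by omega, by omega, h2, h⟩
              · exact Or.inr h
          rcases key 50 le_rfl with h | h
          · exfalso; exact absurd h (not_le.mpr hsmall)
          · exact h
        obtain ⟨i0, hi01, hi050, hi0l, hi0r⟩ := hex
        have hXSc : Multiset.count p XS = 0 := by
          rw [hXS]
          simp [Multiset.count_filter, not_le.mpr hsmall]
        rw [hXSc, zero_add]
        rw [Finset.sum_eq_single i0]
        · rw [hXi]; simp [Multiset.count_filter, hi0l, hi0r]
        · intro j hj hji0
          simp only [mem_Icc] at hj
          rw [hXi]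
          simp only [Multiset.count_filter]
          have : ¬ (t (j + 1) < p ∧ p ≤ t j) := by
            rintro ⟨h1, h2⟩
            rcases lt_or_gt_of_ne hji0 with hlt | hgt
            · have : t i0 ≤ t (j + 1) := hmono (j + 1) i0 (by omega) (by omega) (by omega)
              linarith
            · have : t j ≤ t (i0 + 1) := hmono (i0 + 1) j (by omega) (by omega) (by omega)
              linarith
          simp [this]
        · intro h; exact absurd (mem_Icc.mpr ⟨hi01, hi050⟩) h
    · have h0 : Multiset.count p X = 0 := Multiset.count_eq_zero_of_notMem hpX
      have hS : Multiset.count p XS = 0 :=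
        Nat.eq_zero_of_le_zero (h0 ▸ Multiset.count_le_of_le p (Multiset.filter_le _ X))
      have hI : ∀ i ∈ Icc 1 50, Multiset.count p (Xi i) = 0 := by
        intro i _
        exact Nat.eq_zero_of_le_zero (h0 ▸ Multiset.count_le_of_le p (Multiset.filter_le _ X))
      rw [h0, hS, Finset.sum_congr rfl hI]
      simp
  -- generic hom lemma
  have hhom : ∀ (g : ℝ → ℝ) (s : Finset ℕ) (f : ℕ → Multiset ℝ),
      ((∑ i ∈ s, f i).map g).sum = ∑ i ∈ s, ((f i).map g).sum := by
    intro g s f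
    induction s using Finset.cons_induction with
    | empty => simp
    | cons a s ha ih =>
      rw [Finset.sum_cons, Finset.sum_cons, Multiset.map_add, Multiset.sum_add, ih]
  -- card bound lemma
  have hcardsum : ∀ (s : Multiset ℝ) (a : ℝ), (∀ p ∈ s, a ≤ p) → (Multiset.card s : ℝ) * a ≤ s.sum := by
    intro s a h
    induction s using Multiset.induction with
    | empty => simp
    | cons b s ih =>
      have hb : a ≤ b := h b (Multiset.mem_cons_self b s)
      have hs : (Multiset.card s : ℝ) * a ≤ s.sum :=
        ih (fun p hp => h p (Multiset.mem_cons_of_mem hp))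
      simp only [Multiset.card_cons, Multiset.sum_cons]
      push_cast
      linarith
  -- define y
  set y : ℕ → ℕ := fun i => Multiset.card (Xi i) with hy
  -- sum of W on each Xi
  have hXiW : ∀ i ∈ Icc 1 50, ((Xi i).map W).sum = (y i : ℝ) * w i := by
    intro i hi
    simp only [mem_Icc] at hi
    have : (Xi i).map W = (Xi i).map (fun _ => w i) := by
      apply Multiset.map_congr rfl
      intro p hp
      rw [hXi] at hp
      obtain ⟨hpX2, hpl, hpr⟩ := Multiset.mem_filter.mp hp
      exact hWtype i hi.1 hi.2 p hpl hpr
    rw [this, Multiset.map_const', Multiset.sum_replicate, nsmul_eq_mul]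
  -- sum of W on XS
  have hXSW : (XS.map W).sum = XS.sum * (1 / (1 - t 51)) := by
    have : XS.map W = XS.map (fun p => p * (1 / (1 - t 51))) := by
      apply Multiset.map_congr rfl
      intro p hp
      rw [hXS] at hp
      obtain ⟨hpX2, hps⟩ := Multiset.mem_filter.mp hp
      rw [hWsmall p (hX p hpX2).1 hps]
      ring
    rw [this, Multiset.sum_map_mul_right]
    simp
  -- sums decompose
  have hsumdec : X.sum = XS.sum + ∑ i ∈ Icc 1 50, (Xi i).sum := by
    conv_lhs => rw [hdecomp]
    rw [Multiset.sum_add]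
    congr 1
    have := hhom id (Icc 1 50) Xi
    simpa using this
  have hWdec : (X.map W).sum = XS.sum * (1 / (1 - t 51)) + ∑ i ∈ Icc 1 50, (y i : ℝ) * w i := by
    conv_lhs => rw [hdecomp]
    rw [Multiset.map_add, Multiset.sum_add, hXSW, hhom W]
    rw [Finset.sum_congr rfl hXiW]
  -- bounds
  have hXiLB : ∀ i ∈ Icc 1 50, (y i : ℝ) * t (i + 1) ≤ (Xi i).sum := by
    intro i hi
    apply hcardsum
    intro p hp
    rw [hXi] at hp
    exact le_of_lt (Multiset.mem_filter.mp hp).2.1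
  have hXSnn : 0 ≤ XS.sum := by
    apply Multiset.sum_nonneg
    intro p hp
    have := (hX p (Multiset.mem_of_mem_filter hp)).1
    linarith
  have hyfeas : ∑ i ∈ Icc 1 50, (y i : ℝ) * t (i + 1) ≤ 1 := by
    calc ∑ i ∈ Icc 1 50, (y i : ℝ) * t (i + 1)
        ≤ ∑ i ∈ Icc 1 50, (Xi i).sum := Finset.sum_le_sum hXiLB
      _ ≤ X.sum := by rw [hsumdec]; linarith
      _ ≤ 1 := hXsum
  have hXSle : XS.sum ≤ 1 - ∑ i ∈ Icc 1 50, (y i : ℝ) * t (i + 1) := by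
    have h1 : ∑ i ∈ Icc 1 50, (y i : ℝ) * t (i + 1) ≤ ∑ i ∈ Icc 1 50, (Xi i).sum :=
      Finset.sum_le_sum hXiLB
    have h2 : XS.sum + ∑ i ∈ Icc 1 50, (Xi i).sum ≤ 1 := by rw [← hsumdec]; exact hXsum
    linarith
  -- conclude
  have hfin : (X.map W).sum ≤
      (∑ i ∈ Icc 1 50, (y i : ℝ) * w i)
        + (1 - ∑ i ∈ Icc 1 50, (y i : ℝ) * t (i + 1)) * (1 / (1 - t 51)) := by
    rw [hWdec]
    have : XS.sum * (1 / (1 - t 51)) ≤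
        (1 - ∑ i ∈ Icc 1 50, (y i : ℝ) * t (i + 1)) * (1 / (1 - t 51)) := by
      apply mul_le_mul_of_nonneg_right hXSle
      positivity
    linarith
  exact le_trans hfin (hxmax y hyfeas)
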